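/- (CP form of the t-SVDMII approximation.) Let M ∈ Matrix.unitaryGroup (Fin n) ℂ, let A = U ⋆_M S ⋆_M Vᴴ be a t-SVDM of an m×p×n tensor A, let ρ : Fin n → ℕ with ρ i ≤ min(m,p) for all i, and let A_ρ be the multi-rank-ρ truncation. Then for every pair (i,j) with j < ρ i there exist vectors x_{i,j} : Fin m → ℂ, y_{i,j} : Fin p → ℂ and z_{i,j} : Fin n → ℂ, each of Euclidean norm 1, such that for all a, b, c: ((A_ρ) c) a b = ∑_{i : Fin n} ∑_{j < ρ i} σⱼ⁽ⁱ⁾ · (x_{i,j} a) · (y_{i,j} b) · (z_{i,j} c), where σⱼ⁽ⁱ⁾ := (Ŝ i) j j. In particular A_ρ is a sum of ∑ i, ρ i rank-one tensors of unit Frobenius norm weighted by the retained singular values. -/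

import Mathlib

open scoped BigOperators ComplexConjugate Matrix

noncomputable section

variable {R : Type*}

/-- Mode-3 product of a third-order tensor (encoded by its frontal slices)
with a transform matrix: `(A ×₃ M) i = ∑ j, (M i j) • (A j)`. -/
def mode3 [RCLike R] {ι α β : Type*} [Fintype ι]
    (A : ι → Matrix α β R) (M : Matrix ι ι R) : ι → Matrix α β R :=
  fun i => ∑ j, M i j • A j

/-- Frobenius (entrywise ℓ²) norm of a matrix. -/
def fnorm [RCLike R] {α β : Type*} [Fintype α] [Fintype β] (A : Matrix α β R) : ℝ :=
  Real.sqrt (∑ a, ∑ b, ‖A a b‖ ^ 2)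

/-- Frobenius norm of a tensor: `‖A‖² = ∑ i, ‖A i‖²`. -/
def tnorm [RCLike R] {ι α β : Type*} [Fintype ι] [Fintype α] [Fintype β]
    (A : ι → Matrix α β R) : ℝ :=
  Real.sqrt (∑ i, fnorm (A i) ^ 2)

/-- The ⋆_M product: facewise product in the transform domain, then inverse transform. -/
def tprodM [RCLike R] {ι m p q : Type*} [Fintype ι] [DecidableEq ι] [Fintype p]
    (M : Matrix ι ι R) (A : ι → Matrix m p R) (B : ι → Matrix p q R) :
    ι → Matrix m q R :=
  mode3 (fun i => mode3 A M i * mode3 B M i) M⁻¹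

/-- Conjugate transpose of a tensor under ⋆_M. -/
def tconj [RCLike R] {ι m p : Type*} [Fintype ι] [DecidableEq ι]
    (M : Matrix ι ι R) (A : ι → Matrix m p R) : ι → Matrix p m R :=
  mode3 (fun i => (mode3 A M i)ᴴ) M⁻¹

/-- The identity tensor under ⋆_M. -/
def tId [RCLike R] (m : Type*) [DecidableEq m] {ι : Type*} [Fintype ι] [DecidableEq ι]
    (M : Matrix ι ι R) : ι → Matrix m m R :=
  mode3 (fun _ => (1 : Matrix m m R)) M⁻¹

/-- A square tensor `Q` is ⋆_M-unitary if `Qᴴ ⋆_M Q = Q ⋆_M Qᴴ = I`. -/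
def tUnitary [RCLike R] {ι m : Type*} [Fintype ι] [DecidableEq ι] [Fintype m] [DecidableEq m]
    (M : Matrix ι ι R) (Q : ι → Matrix m m R) : Prop :=
  tprodM M (tconj M Q) Q = tId m M ∧ tprodM M Q (tconj M Q) = tId m M

/-- A t-SVDM of `A`: a factorization `A = U ⋆_M S ⋆_M Vᴴ` with `U`, `V` ⋆_M-unitary and every
transform-domain slice `Ŝ i` diagonal with real, nonnegative, nonincreasing diagonal entries. -/
def IsTSVDM [RCLike R] {m p n : ℕ} (M : Matrix (Fin n) (Fin n) R)
    (A : Fin n → Matrix (Fin m) (Fin p) R)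
    (U : Fin n → Matrix (Fin m) (Fin m) R)
    (S : Fin n → Matrix (Fin m) (Fin p) R)
    (V : Fin n → Matrix (Fin p) (Fin p) R) : Prop :=
  A = tprodM M (tprodM M U S) (tconj M V) ∧
  tUnitary M U ∧ tUnitary M V ∧
  (∀ (i : Fin n) (a : Fin m) (b : Fin p), (a : ℕ) ≠ (b : ℕ) → mode3 S M i a b = 0) ∧
  (∀ (i : Fin n) (a : Fin m) (b : Fin p), (a : ℕ) = (b : ℕ) →
      ∃ r : ℝ, 0 ≤ r ∧ mode3 S M i a b = (r : R)) ∧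
  (∀ (i : Fin n) (a a' : Fin m) (b b' : Fin p), (a : ℕ) = (b : ℕ) → (a' : ℕ) = (b' : ℕ) →
      (a : ℕ) ≤ (a' : ℕ) →
      RCLike.re (mode3 S M i a' b') ≤ RCLike.re (mode3 S M i a b))

/-- Transform-domain slice of a truncation:
(first k columns of Û) * (leading k×k block of Ŝ) * (first k columns of V̂)ᴴ. -/
def truncSlice [RCLike R] {m p : ℕ} (k : ℕ) (Uh : Matrix (Fin m) (Fin m) R)
    (Sh : Matrix (Fin m) (Fin p) R) (Vh : Matrix (Fin p) (Fin p) R) :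
    Matrix (Fin m) (Fin p) R :=
  Matrix.of fun a b =>
    ∑ j : Fin m, ∑ l : Fin p,
      if (j : ℕ) < k ∧ (l : ℕ) < k then Uh a j * Sh j l * star (Vh b l) else 0

/-- The multi-rank-ρ truncation of a t-SVDM (use `ρ = fun _ => k` for the t-rank-k truncation). -/
def truncTensor [RCLike R] {m p n : ℕ} (M : Matrix (Fin n) (Fin n) R)
    (U : Fin n → Matrix (Fin m) (Fin m) R) (S : Fin n → Matrix (Fin m) (Fin p) R)
    (V : Fin n → Matrix (Fin p) (Fin p) R) (ρ : Fin n → ℕ) :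
    Fin n → Matrix (Fin m) (Fin p) R :=
  mode3 (fun i => truncSlice (ρ i) (mode3 U M i) (mode3 S M i) (mode3 V M i)) M⁻¹

/-- The permuted tensor `Aᴾ`: `(Aᴾ c) i j = (A i) c j`. -/
def tperm [RCLike R] {m p n : ℕ} (A : Fin n → Matrix (Fin m) (Fin p) R) :
    Fin m → Matrix (Fin n) (Fin p) R :=
  fun c => Matrix.of fun i j => A i c j

/-!
Since `Ŝ i` is diagonal, the transform slice of the truncation is
`∑_{j < ρ i} σⱼ⁽ⁱ⁾ • (column j of Û i) (column j of V̂ i)ᴴ`; applying `M⁻¹` along the third mode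
contributes the factor `M⁻¹ e i`, so the tube vector is column `i` of `M⁻¹ = Mᴴ`. All three
vectors are columns of unitary matrices: `Û i` and `V̂ i` are unitary because ⋆_M-unitarity
holds facewise in the transform domain.
-/

open Matrix

section Mode3

variable [RCLike R] {ι α β : Type*} [Fintype ι]

lemma mode3_apply (X : ι → Matrix α β R) (N : Matrix ι ι R) (e : ι) (a : α) (b : β) :
    mode3 X N e a b = ∑ c, N e c * X c a b := by
  simp [mode3, Matrix.sum_apply]

lemma mode3_mode3 (X : ι → Matrix α β R) (N M : Matrix ι ι R) :
    mode3 (mode3 X N) M = mode3 X (M * N) := by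
  funext i
  simp only [mode3, Finset.smul_sum, smul_smul, mul_apply]
  rw [Finset.sum_comm]
  simp [Finset.sum_smul]

variable [DecidableEq ι]

lemma mode3_one (X : ι → Matrix α β R) : mode3 X (1 : Matrix ι ι R) = X := by
  funext i
  simp [mode3, one_apply, ite_smul]

lemma mode3_mode3_inv {M : Matrix ι ι R} (hM : IsUnit M.det) (X : ι → Matrix α β R) :
    mode3 (mode3 X M⁻¹) M = X := by
  rw [mode3_mode3, mul_nonsing_inv M hM, mode3_one]

lemma conjTranspose_mul_self_mode3_of_tUnitary [Fintype α] [DecidableEq α]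
    {M : Matrix ι ι R} (hM : IsUnit M.det) {Q : ι → Matrix α α R} (hQ : tUnitary M Q) (i : ι) :
    (mode3 Q M i)ᴴ * mode3 Q M i = 1 := by
  have h := congrFun (congrArg (fun X => mode3 X M) hQ.1) i
  simp only [tprodM, tconj, tId, mode3_mode3_inv hM] at h
  exact h

end Mode3

lemma sum_norm_sq_apply_eq_one_of_conjTranspose_mul_self [RCLike R] {ι κ : Type*} [Fintype ι]
    [DecidableEq κ] {Q : Matrix ι κ R} (hQ : Qᴴ * Q = 1) (j : κ) :
    ∑ a, ‖Q a j‖ ^ 2 = 1 := by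
  have h := congrFun (congrFun hQ j) j
  simp only [mul_apply, one_apply_eq, conjTranspose_apply, RCLike.star_def,
    RCLike.conj_mul] at h
  exact_mod_cast h

lemma truncSlice_apply_of_diag [RCLike R] {m p k : ℕ} (hk : k ≤ min m p)
    (Uh : Matrix (Fin m) (Fin m) R) {Sh : Matrix (Fin m) (Fin p) R}
    (hSh : ∀ (j : Fin m) (l : Fin p), (j : ℕ) ≠ l → Sh j l = 0)
    (Vh : Matrix (Fin p) (Fin p) R) (a : Fin m) (b : Fin p) :
    truncSlice k Uh Sh Vh a b =
      ∑ q : Fin (min m p), if (q : ℕ) < k then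
        Uh a (Fin.castLE (min_le_left m p) q) *
          Sh (Fin.castLE (min_le_left m p) q) (Fin.castLE (min_le_right m p) q) *
          star (Vh b (Fin.castLE (min_le_right m p) q))
      else 0 := by
  rw [truncSlice, of_apply, ← Fintype.sum_prod_type']
  symm
  apply Fintype.sum_of_injective
    (fun q => (Fin.castLE (min_le_left m p) q, Fin.castLE (min_le_right m p) q))
    (fun q q' h => Fin.ext (by simpa using congrArg (fun x => (x.1 : ℕ)) h))
  · rintro ⟨j, l⟩ hjl
    by_cases hdiag : (j : ℕ) = l
    · have hj : ¬ (j : ℕ) < k := fun hj => hjl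
        ⟨⟨j, hj.trans_le hk⟩, Prod.ext (Fin.ext rfl) (Fin.ext hdiag)⟩
      simp [hj]
    · simp [hSh j l hdiag]
  · intro q
    simp

/-- CP form of the t-SVDMII approximation: the multi-rank-ρ truncation is a sum
of `∑ i, ρ i` rank-one tensors built from unit vectors, weighted by the retained transform-domain
singular values `σⱼ⁽ⁱ⁾ = (Ŝ i) j j`. -/
theorem stmt17 {m p n : ℕ}
    (M : Matrix (Fin n) (Fin n) ℂ) (hM : M ∈ Matrix.unitaryGroup (Fin n) ℂ)
    (A : Fin n → Matrix (Fin m) (Fin p) ℂ)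
    (U : Fin n → Matrix (Fin m) (Fin m) ℂ)
    (S : Fin n → Matrix (Fin m) (Fin p) ℂ)
    (V : Fin n → Matrix (Fin p) (Fin p) ℂ)
    (hsvd : IsTSVDM M A U S V)
    (ρ : Fin n → ℕ) (hρ : ∀ i, ρ i ≤ min m p) :
    ∃ (x : Fin n → Fin (min m p) → Fin m → ℂ)
      (y : Fin n → Fin (min m p) → Fin p → ℂ)
      (z : Fin n → Fin (min m p) → Fin n → ℂ),
      (∀ (i : Fin n) (j : Fin (min m p)), (j : ℕ) < ρ i →
        (∑ a, ‖x i j a‖ ^ 2 = 1) ∧ (∑ b, ‖y i j b‖ ^ 2 = 1) ∧ (∑ e, ‖z i j e‖ ^ 2 = 1)) ∧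
      ∀ (a : Fin m) (b : Fin p) (e : Fin n),
        truncTensor M U S V ρ e a b =
          ∑ i : Fin n, ∑ j : Fin (min m p),
            if (j : ℕ) < ρ i then
              mode3 S M i (Fin.castLE (min_le_left m p) j) (Fin.castLE (min_le_right m p) j) *
                x i j a * y i j b * z i j e
            else 0 := by
  have hMdet : IsUnit M.det := UnitaryGroup.det_isUnit ⟨M, hM⟩
  have hU := conjTranspose_mul_self_mode3_of_tUnitary hMdet hsvd.2.1
  have hV := conjTranspose_mul_self_mode3_of_tUnitary hMdet hsvd.2.2.1
  have hMinv : M⁻¹ = star M := inv_eq_left_inv (mem_unitaryGroup_iff'.1 hM)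
  have hMinv_unitary : (M⁻¹)ᴴ * M⁻¹ = 1 := by
    rw [hMinv, star_eq_conjTranspose, conjTranspose_conjTranspose]
    exact mem_unitaryGroup_iff.1 hM
  refine ⟨fun i j a => mode3 U M i a (Fin.castLE (min_le_left m p) j),
    fun i j b => star (mode3 V M i b (Fin.castLE (min_le_right m p) j)),
    fun i _ e => M⁻¹ e i, fun i j _ => ⟨?_, ?_, ?_⟩, fun a b e => ?_⟩
  · exact sum_norm_sq_apply_eq_one_of_conjTranspose_mul_self (hU i) _
  · simpa only [norm_star] using sum_norm_sq_apply_eq_one_of_conjTranspose_mul_self (hV i) _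
  · exact sum_norm_sq_apply_eq_one_of_conjTranspose_mul_self hMinv_unitary i
  rw [truncTensor, mode3_apply]
  refine Finset.sum_congr rfl fun c _ => ?_
  rw [truncSlice_apply_of_diag (hρ c) _ (hsvd.2.2.2.1 c), Finset.mul_sum]
  refine Finset.sum_congr rfl fun q _ => ?_
  split_ifs <;> ring
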